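/- Let b, d ∈ {1, 2, …, n}. If s ∈ H_1(K_b) has persistence interval (b, d) in H_1(K_•), then its image θ_{1,b}(s) ∈ H_1(K̃_b) has persistence interval (b, d) in H_1(K̃_•). Furthermore, if s has persistence interval (b, ∞) in H_1(K_•), then θ_{1,b}(s) has persistence interval (b, ∞) in H_1(K̃_•). -/

import Mathlib

/-- An abstract simplicial complex on a vertex type `α`: a collection of nonempty
finite subsets of `α` closed under passing to nonempty subsets. -/
structure AbsSC (α : Type) where
  faces : Set (Finset α)
  not_empty_mem : ∅ ∉ faces
  down_closed : ∀ {s t : Finset α}, s ∈ faces → t ⊆ s → t.Nonempty → t ∈ faces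

namespace AbsSC

variable {α : Type}

/-- The vertex set of an abstract simplicial complex. -/
def vertexSet (K : AbsSC α) : Set α := {v | {v} ∈ K.faces}

/-- The type of `q`-simplices (faces with `q+1` vertices). -/
def simplices (K : AbsSC α) (q : ℕ) : Type :=
  {s : Finset α // s ∈ K.faces ∧ s.card = q + 1}

/-- The space of `q`-chains over `ℤ/2`: formal sums of `q`-simplices. -/
abbrev Chain (K : AbsSC α) (q : ℕ) : Type := K.simplices q →₀ ZMod 2

/-- The sum of the `q`-dimensional faces of a `(q+1)`-simplex. -/
noncomputable def faceChain (K : AbsSC α) (q : ℕ) (s : K.simplices (q + 1)) : K.Chain q :=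
  ∑ t ∈ (s.1.powersetCard (q + 1)).attach,
    Finsupp.single
      ⟨t.1, by
        obtain ⟨hsub, hcard⟩ := Finset.mem_powersetCard.mp t.2
        refine ⟨K.down_closed s.2.1 hsub ?_, hcard⟩
        rw [← Finset.card_pos, hcard]
        omega⟩
      (1 : ZMod 2)

/-- The boundary map `∂_{q+1} : C_{q+1}(K) → C_q(K)`, sending each `(q+1)`-simplex to
the sum of its `q`-dimensional faces. -/
noncomputable def boundary (K : AbsSC α) (q : ℕ) :
    K.Chain (q + 1) →ₗ[ZMod 2] K.Chain q :=
  Finsupp.lsum (ZMod 2) fun s => LinearMap.toSpanSingleton (ZMod 2) (K.Chain q) (K.faceChain q s)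

/-- The cycle subspace: `ker ∂_q` (all of `C_0` in degree `0`). -/
noncomputable def cycles (K : AbsSC α) : (q : ℕ) → Submodule (ZMod 2) (K.Chain q)
  | 0 => ⊤
  | q + 1 => LinearMap.ker (K.boundary q)

/-- The boundaries, viewed as a submodule of the cycles. -/
noncomputable def boundariesIn (K : AbsSC α) (q : ℕ) :
    Submodule (ZMod 2) (K.cycles q) :=
  Submodule.comap (K.cycles q).subtype (LinearMap.range (K.boundary q))

/-- The `q`-th simplicial homology over `ℤ/2`: `H_q(K) = ker ∂_q / im ∂_{q+1}`. -/
def Homology (K : AbsSC α) (q : ℕ) : Type :=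
  (K.cycles q) ⧸ (K.boundariesIn q)

noncomputable instance (K : AbsSC α) (q : ℕ) : AddCommGroup (K.Homology q) :=
  inferInstanceAs (AddCommGroup ((K.cycles q) ⧸ (K.boundariesIn q)))

noncomputable instance (K : AbsSC α) (q : ℕ) : Module (ZMod 2) (K.Homology q) :=
  inferInstanceAs (Module (ZMod 2) ((K.cycles q) ⧸ (K.boundariesIn q)))

/-- The homology class of a cycle. -/
noncomputable def hClass (K : AbsSC α) (q : ℕ) (c : K.Chain q) (hc : c ∈ K.cycles q) :
    K.Homology q :=
  Submodule.Quotient.mk ⟨c, hc⟩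

/-- The chain map induced by an inclusion of simplicial complexes. -/
noncomputable def chainMap (K L : AbsSC α) (h : K.faces ⊆ L.faces) (q : ℕ) :
    K.Chain q →ₗ[ZMod 2] L.Chain q :=
  Finsupp.lmapDomain (ZMod 2) (ZMod 2) fun s : K.simplices q =>
    (⟨s.1, h s.2.1, s.2.2⟩ : L.simplices q)

/-- `θ` is the map on `q`-th homology induced by the inclusion `K ⊆ L`: it sends the
class of every cycle `c` of `K` to the class of the image chain of `c` in `L`. -/
def InducedHom (K L : AbsSC α) (q : ℕ)
    (θ : K.Homology q →ₗ[ZMod 2] L.Homology q) : Prop :=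
  ∃ h : K.faces ⊆ L.faces,
    ∀ (c : K.Chain q) (hc : c ∈ K.cycles q),
      ∃ hc' : chainMap K L h q c ∈ L.cycles q,
        θ (K.hClass q c hc) = L.hClass q (chainMap K L h q c) hc'

end AbsSC

/-- The faces of the gluing stars `S = S_1 ⊔ ⋯ ⊔ S_k`: for each `j`, the vertex `{z j}`,
the vertices `{v}` for `v ∈ P j`, and the edges `{z j, v}` for `v ∈ P j`. -/
def starFaces {α : Type} [DecidableEq α] {k : ℕ} (P : Fin k → Set α) (z : Fin k → α) :
    Set (Finset α) :=
  {s | ∃ j : Fin k, s = {z j} ∨ ∃ v ∈ P j, s = {v} ∨ s = {z j, v}}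

section Tower

variable {W : ℕ → Type} [∀ i, AddCommGroup (W i)] [∀ i, Module (ZMod 2) (W i)]

/-- The composite `φ_{i,j} = φ_{j-1} ∘ ⋯ ∘ φ_i` of the connecting maps of a tower
(the identity when `i = j`). -/
noncomputable def comps (φ : ∀ i, W i →ₗ[ZMod 2] W (i + 1)) {i j : ℕ} (h : i ≤ j) :
    W i →ₗ[ZMod 2] W j :=
  Nat.leRecOn (C := fun m => W i →ₗ[ZMod 2] W m) h (fun {m} g => (φ m).comp g) LinearMap.id

/-- `s ∈ W b` has persistence interval `(b, d)` with finite death `d ∈ {b+1, …, n}`: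
`s ∉ im φ_{b-1}`, `φ_{b,d'}(s) ∉ im φ_{b-1,d'}` for all `b ≤ d' < d`, and
`φ_{b,d}(s) ∈ im φ_{b-1,d}`. -/
def HasPersIntervalFin (φ : ∀ i, W i →ₗ[ZMod 2] W (i + 1)) (n b d : ℕ) (s : W b) : Prop :=
  ∃ (_ : 1 ≤ b) (hbd : b < d) (_ : d ≤ n),
    s ∉ LinearMap.range (comps φ (Nat.sub_le b 1)) ∧
    (∀ (d' : ℕ) (hd' : b ≤ d'), d' < d →
      comps φ hd' s ∉ LinearMap.range (comps φ (Nat.le_trans (Nat.sub_le b 1) hd'))) ∧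
    comps φ (Nat.le_of_lt hbd) s ∈
      LinearMap.range (comps φ (Nat.le_trans (Nat.sub_le b 1) (Nat.le_of_lt hbd)))

/-- `s ∈ W b` has persistence interval `(b, ∞)`: `s ∉ im φ_{b-1}` and
`φ_{b,d'}(s) ∉ im φ_{b-1,d'}` for all `b ≤ d' ≤ n`. -/
def HasPersIntervalInf (φ : ∀ i, W i →ₗ[ZMod 2] W (i + 1)) (n b : ℕ) (s : W b) : Prop :=
  ∃ _ : 1 ≤ b,
    s ∉ LinearMap.range (comps φ (Nat.sub_le b 1)) ∧
    ∀ (d' : ℕ) (hd' : b ≤ d'), d' ≤ n →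
      comps φ hd' s ∉ LinearMap.range (comps φ (Nat.le_trans (Nat.sub_le b 1) hd'))

end Tower

/-
Gluing the stars adds no 2-simplices, and every new edge `{z_j, v}` contains a vertex that
occurs in no `K_i`. Hence if a 1-cycle `c` of `K_q` becomes homologous in `K̃_q` to a cycle `c'`
of `K̃_p`, the bounding 2-chain lives in `K_q`, so `c'` is supported on edges of `K_q`, hence of
`K_p`: already in `K_q`, `c` is homologous to a cycle of `K_p`. Thus `θ_q x ∈ im ψ_{p,q}` forces
`x ∈ im φ_{p,q}`, while the converse holds since the squares commute; both membership
conditions defining a persistence interval are therefore preserved by `θ`.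
-/

section Tower

variable {W W' : ℕ → Type} [∀ i, AddCommGroup (W i)] [∀ i, Module (ZMod 2) (W i)]
  [∀ i, AddCommGroup (W' i)] [∀ i, Module (ZMod 2) (W' i)]
  {φ : ∀ i, W i →ₗ[ZMod 2] W (i + 1)} {ψ : ∀ i, W' i →ₗ[ZMod 2] W' (i + 1)}
  {θ : ∀ i, W i →ₗ[ZMod 2] W' i} {n : ℕ}

theorem comps_self (φ : ∀ i, W i →ₗ[ZMod 2] W (i + 1)) {i : ℕ} (h : i ≤ i) :
    comps φ h = LinearMap.id :=
  Nat.leRecOn_self _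

theorem comps_succ (φ : ∀ i, W i →ₗ[ZMod 2] W (i + 1)) {i j : ℕ} (h : i ≤ j)
    {h' : i ≤ j + 1} : comps φ h' = (φ j).comp (comps φ h) :=
  Nat.leRecOn_succ h _

theorem comp_comps_eq (hsq : ∀ i, i < n → (θ (i + 1)).comp (φ i) = (ψ i).comp (θ i))
    {i j : ℕ} (h : i ≤ j) (hjn : j ≤ n) :
    (θ j).comp (comps φ h) = (comps ψ h).comp (θ i) := by
  induction j, h using Nat.le_induction with
  | base => rw [comps_self, comps_self, LinearMap.comp_id, LinearMap.id_comp]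
  | succ m hm ih =>
    rw [comps_succ φ hm, comps_succ ψ hm, ← LinearMap.comp_assoc, hsq m (by omega),
      LinearMap.comp_assoc, ih (by omega), ← LinearMap.comp_assoc]

theorem comps_map_apply (hsq : ∀ i, i < n → (θ (i + 1)).comp (φ i) = (ψ i).comp (θ i))
    {i j : ℕ} (h : i ≤ j) (hjn : j ≤ n) (x : W i) :
    comps ψ h (θ i x) = θ j (comps φ h x) :=
  (LinearMap.congr_fun (comp_comps_eq hsq h hjn) x).symm

theorem map_mem_range_comps (hsq : ∀ i, i < n → (θ (i + 1)).comp (φ i) = (ψ i).comp (θ i))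
    {p q : ℕ} (h : p ≤ q) (hqn : q ≤ n) {x : W q} (hx : x ∈ LinearMap.range (comps φ h)) :
    θ q x ∈ LinearMap.range (comps ψ h) := by
  obtain ⟨u, rfl⟩ := hx
  exact ⟨θ p u, comps_map_apply hsq h hqn u⟩

theorem HasPersIntervalFin.map
    (hsq : ∀ i, i < n → (θ (i + 1)).comp (φ i) = (ψ i).comp (θ i))
    (hreflect : ∀ {p q : ℕ} (h : p ≤ q), q ≤ n →
      ∀ x, θ q x ∈ LinearMap.range (comps ψ h) → x ∈ LinearMap.range (comps φ h))
    {b d : ℕ} {s : W b} (hs : HasPersIntervalFin φ n b d s) :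
    HasPersIntervalFin ψ n b d (θ b s) := by
  obtain ⟨hb1, hbd, hdn, hborn, halive, hdead⟩ := hs
  refine ⟨hb1, hbd, hdn, mt (hreflect _ (hbd.le.trans hdn) s) hborn,
    fun d' hbd' hd'd => ?_, ?_⟩
  · rw [comps_map_apply hsq hbd' (hd'd.le.trans hdn)]
    exact mt (hreflect _ (hd'd.le.trans hdn) _) (halive d' hbd' hd'd)
  · rw [comps_map_apply hsq hbd.le hdn]
    exact map_mem_range_comps hsq _ hdn hdead

theorem HasPersIntervalInf.map
    (hsq : ∀ i, i < n → (θ (i + 1)).comp (φ i) = (ψ i).comp (θ i))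
    (hreflect : ∀ {p q : ℕ} (h : p ≤ q), q ≤ n →
      ∀ x, θ q x ∈ LinearMap.range (comps ψ h) → x ∈ LinearMap.range (comps φ h))
    {b : ℕ} (hbn : b ≤ n) {s : W b} (hs : HasPersIntervalInf φ n b s) :
    HasPersIntervalInf ψ n b (θ b s) := by
  obtain ⟨hb1, hborn, halive⟩ := hs
  refine ⟨hb1, mt (hreflect _ hbn s) hborn, fun d' hbd' hd'n => ?_⟩
  rw [comps_map_apply hsq hbd' hd'n]
  exact mt (hreflect _ hd'n _) (halive d' hbd' hd'n)

end Tower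

namespace AbsSC

variable {α : Type}

def simplicesInclusion {K L : AbsSC α} (h : K.faces ⊆ L.faces) (q : ℕ) :
    K.simplices q → L.simplices q :=
  fun s => ⟨s.1, h s.2.1, s.2.2⟩

theorem simplicesInclusion_injective {K L : AbsSC α} (h : K.faces ⊆ L.faces) (q : ℕ) :
    Function.Injective (simplicesInclusion h q) :=
  fun _ _ hst => Subtype.ext (congrArg Subtype.val hst :)

theorem chainMap_eq_mapDomain {K L : AbsSC α} (h : K.faces ⊆ L.faces) (q : ℕ) (c : K.Chain q) :
    chainMap K L h q c = Finsupp.mapDomain (simplicesInclusion h q) c :=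
  rfl

theorem chainMap_injective {K L : AbsSC α} (h : K.faces ⊆ L.faces) (q : ℕ) :
    Function.Injective (chainMap K L h q) :=
  Finsupp.mapDomain_injective (simplicesInclusion_injective h q)

theorem chainMap_self (K : AbsSC α) (h : K.faces ⊆ K.faces) (q : ℕ) (c : K.Chain q) :
    chainMap K K h q c = c :=
  Finsupp.mapDomain_id

theorem chainMap_chainMap {K L M : AbsSC α} (hKL : K.faces ⊆ L.faces) (hLM : L.faces ⊆ M.faces)
    (q : ℕ) (c : K.Chain q) :
    chainMap L M hLM q (chainMap K L hKL q c) = chainMap K M (hKL.trans hLM) q c :=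
  (Finsupp.mapDomain_comp).symm

theorem chainMap_faceChain {K L : AbsSC α} (h : K.faces ⊆ L.faces) (q : ℕ)
    (s : K.simplices (q + 1)) :
    chainMap K L h q (K.faceChain q s) = L.faceChain q (simplicesInclusion h (q + 1) s) := by
  rw [chainMap_eq_mapDomain, faceChain, Finsupp.mapDomain_finsetSum]
  exact Finset.sum_congr rfl fun _ _ => Finsupp.mapDomain_single

theorem boundary_single (K : AbsSC α) (q : ℕ) (s : K.simplices (q + 1)) (a : ZMod 2) :
    K.boundary q (Finsupp.single s a) = a • K.faceChain q s := by
  rw [boundary, Finsupp.lsum_single, LinearMap.toSpanSingleton_apply]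

theorem chainMap_boundary {K L : AbsSC α} (h : K.faces ⊆ L.faces) (q : ℕ)
    (c : K.Chain (q + 1)) :
    chainMap K L h q (K.boundary q c) = L.boundary q (chainMap K L h (q + 1) c) := by
  induction c using Finsupp.induction_linear with
  | zero => simp only [map_zero]
  | add f g hf hg => rw [map_add, map_add, hf, hg, ← map_add, ← map_add]
  | single s a =>
    rw [boundary_single, map_smul, chainMap_faceChain, chainMap_eq_mapDomain,
      Finsupp.mapDomain_single, boundary_single]

theorem mem_cycles_succ_iff (K : AbsSC α) {q : ℕ} (c : K.Chain (q + 1)) :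
    c ∈ K.cycles (q + 1) ↔ K.boundary q c = 0 :=
  Iff.rfl

theorem mem_faces_of_mem_support_chainMap {K L : AbsSC α} (h : K.faces ⊆ L.faces) {q : ℕ}
    {c : K.Chain q} {t : L.simplices q} (ht : t ∈ (chainMap K L h q c).support) :
    t.1 ∈ K.faces := by
  classical
  obtain ⟨s, -, rfl⟩ := Finset.mem_image.mp (Finsupp.mapDomain_support ht)
  exact s.2.1

theorem exists_chainMap_eq_of_support {K L : AbsSC α} (h : K.faces ⊆ L.faces) {q : ℕ}
    (c : L.Chain q) (hc : ∀ t ∈ c.support, t.1 ∈ K.faces) :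
    ∃ c' : K.Chain q, chainMap K L h q c' = c :=
  ⟨_, Finsupp.mapDomain_comapDomain _ (simplicesInclusion_injective h q) c
    fun t ht => ⟨⟨t.1, hc t ht, t.2.2⟩, rfl⟩⟩

theorem hClass_surjective (K : AbsSC α) (q : ℕ) (x : K.Homology q) :
    ∃ c hc, K.hClass q c hc = x := by
  obtain ⟨⟨c, hc⟩, rfl⟩ := Submodule.Quotient.mk_surjective _ x
  exact ⟨c, hc, rfl⟩

theorem hClass_eq_hClass_iff (K : AbsSC α) {q : ℕ} {c c' : K.Chain q} (hc : c ∈ K.cycles q)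
    (hc' : c' ∈ K.cycles q) :
    K.hClass q c hc = K.hClass q c' hc' ↔ ∃ B, K.boundary q B = c - c' :=
  Submodule.Quotient.eq _

theorem hClass_congr (K : AbsSC α) {q : ℕ} {c c' : K.Chain q} (h : c = c')
    (hc : c ∈ K.cycles q) (hc' : c' ∈ K.cycles q) : K.hClass q c hc = K.hClass q c' hc' := by
  subst h
  rfl

theorem inducedHom_id (K : AbsSC α) (q : ℕ) : InducedHom K K q LinearMap.id :=
  ⟨subset_rfl, fun c hc =>
    ⟨(chainMap_self K _ q c).symm ▸ hc, hClass_congr K (chainMap_self K _ q c).symm _ _⟩⟩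

theorem InducedHom.comp {K L M : AbsSC α} {q : ℕ}
    {f : K.Homology q →ₗ[ZMod 2] L.Homology q} {g : L.Homology q →ₗ[ZMod 2] M.Homology q}
    (hf : InducedHom K L q f) (hg : InducedHom L M q g) : InducedHom K M q (g.comp f) := by
  obtain ⟨hKL, hf⟩ := hf
  obtain ⟨hLM, hg⟩ := hg
  refine ⟨hKL.trans hLM, fun c hc => ?_⟩
  obtain ⟨hc₁, hfc⟩ := hf c hc
  obtain ⟨hc₂, hgc⟩ := hg _ hc₁
  refine ⟨chainMap_chainMap hKL hLM q c ▸ hc₂, ?_⟩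
  rw [LinearMap.comp_apply, hfc, hgc]
  exact hClass_congr M (chainMap_chainMap hKL hLM q c) _ _

theorem inducedHom_comps {M : ℕ → AbsSC α} {q n : ℕ}
    {φ : ∀ i, (M i).Homology q →ₗ[ZMod 2] (M (i + 1)).Homology q}
    (hφ : ∀ i, i < n → InducedHom (M i) (M (i + 1)) q (φ i))
    {i j : ℕ} (h : i ≤ j) (hjn : j ≤ n) : InducedHom (M i) (M j) q (comps φ h) := by
  induction j, h using Nat.le_induction with
  | base => rw [comps_self]; exact inducedHom_id _ _
  | succ m hm ih =>
    rw [comps_succ φ hm]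
    exact (ih (by omega)).comp (hφ m (by omega))

theorem exists_cycle_sub_eq_boundary {Kp Kq Ktp Ktq : AbsSC α} (hpq : Kp.faces ⊆ Kq.faces)
    (htpq : Ktp.faces ⊆ Ktq.faces) (hqtq : Kq.faces ⊆ Ktq.faces)
    (h2 : ∀ s ∈ Ktq.faces, s.card = 3 → s ∈ Kq.faces)
    (h1 : ∀ s ∈ Ktp.faces, s.card = 2 → s ∈ Kq.faces → s ∈ Kp.faces)
    {c : Kq.Chain 1} {c' : Ktp.Chain 1} (hc' : c' ∈ Ktp.cycles 1) {B : Ktq.Chain 2}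
    (hB : Ktq.boundary 1 B = chainMap Kq Ktq hqtq 1 c - chainMap Ktp Ktq htpq 1 c') :
    ∃ c'' ∈ Kp.cycles 1, ∃ B', Kq.boundary 1 B' = c - chainMap Kp Kq hpq 1 c'' := by
  obtain ⟨B', rfl⟩ := exists_chainMap_eq_of_support hqtq B fun t _ => h2 t.1 t.2.1 t.2.2
  have hc'_eq : chainMap Ktp Ktq htpq 1 c' = chainMap Kq Ktq hqtq 1 (c - Kq.boundary 1 B') := by
    rw [map_sub, chainMap_boundary, hB, sub_sub_cancel]
  obtain ⟨c'', hc''⟩ := exists_chainMap_eq_of_support (hpq.trans hqtq)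
    (chainMap Ktp Ktq htpq 1 c') fun t ht =>
      h1 t.1 (mem_faces_of_mem_support_chainMap htpq ht) t.2.2
        (mem_faces_of_mem_support_chainMap hqtq (hc'_eq ▸ ht))
  refine ⟨c'', ?_, B', chainMap_injective hqtq 1 ?_⟩
  · rw [mem_cycles_succ_iff] at hc' ⊢
    apply chainMap_injective (hpq.trans hqtq) 0
    rw [chainMap_boundary, hc'', ← chainMap_boundary, hc', map_zero, map_zero]
  · rw [chainMap_boundary, hB, map_sub, chainMap_chainMap, hc'']

theorem mem_range_of_map_mem_range {Kp Kq Ktp Ktq : AbsSC α}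
    {f : Kp.Homology 1 →ₗ[ZMod 2] Kq.Homology 1}
    {g : Ktp.Homology 1 →ₗ[ZMod 2] Ktq.Homology 1}
    {θ : Kq.Homology 1 →ₗ[ZMod 2] Ktq.Homology 1}
    (hf : InducedHom Kp Kq 1 f) (hg : InducedHom Ktp Ktq 1 g) (hθ : InducedHom Kq Ktq 1 θ)
    (h2 : ∀ s ∈ Ktq.faces, s.card = 3 → s ∈ Kq.faces)
    (h1 : ∀ s ∈ Ktp.faces, s.card = 2 → s ∈ Kq.faces → s ∈ Kp.faces)
    {x : Kq.Homology 1} (hx : θ x ∈ LinearMap.range g) : x ∈ LinearMap.range f := by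
  obtain ⟨hpq, hf⟩ := hf
  obtain ⟨htpq, hg⟩ := hg
  obtain ⟨hqtq, hθ⟩ := hθ
  obtain ⟨y, hy⟩ := hx
  obtain ⟨c, hc, rfl⟩ := hClass_surjective Kq 1 x
  obtain ⟨c', hc', rfl⟩ := hClass_surjective Ktp 1 y
  obtain ⟨hc₁, hgc'⟩ := hg c' hc'
  obtain ⟨hc₂, hθc⟩ := hθ c hc
  rw [hgc', hθc, eq_comm, hClass_eq_hClass_iff] at hy
  obtain ⟨B, hB⟩ := hy
  obtain ⟨c'', hc'', B', hB'⟩ := exists_cycle_sub_eq_boundary hpq htpq hqtq h2 h1 hc' hB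
  obtain ⟨hc₃, hfc''⟩ := hf c'' hc''
  refine ⟨_, hfc''.trans ((hClass_eq_hClass_iff _ _ _).mpr ⟨-B', ?_⟩)⟩
  rw [map_neg, hB', neg_sub]

end AbsSC

section Star

variable {α : Type} [DecidableEq α] {k : ℕ} {P : Fin k → Set α} {z : Fin k → α}

theorem card_le_two_of_mem_starFaces {s : Finset α} (hs : s ∈ starFaces P z) : s.card ≤ 2 := by
  obtain ⟨j, rfl | ⟨v, -, rfl | rfl⟩⟩ := hs
  · simp
  · simp
  · exact (Finset.card_insert_le _ _).trans (by simp)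

theorem exists_mem_of_mem_starFaces {s : Finset α} (hs : s ∈ starFaces P z) (h2 : s.card = 2) :
    ∃ j, z j ∈ s := by
  obtain ⟨j, rfl | ⟨v, -, rfl | rfl⟩⟩ := hs
  · exact ⟨j, Finset.mem_singleton_self _⟩
  · simp at h2
  · exact ⟨j, Finset.mem_insert_self _ _⟩

theorem AbsSC.mem_faces_of_card_eq_three {K L : AbsSC α}
    (hL : L.faces ⊆ K.faces ∪ starFaces P z) {s : Finset α} (hs : s ∈ L.faces)
    (h3 : s.card = 3) : s ∈ K.faces :=
  (hL hs).resolve_right fun hstar => by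
    have := card_le_two_of_mem_starFaces hstar
    omega

theorem AbsSC.mem_faces_of_card_eq_two {Kp Kq Ktp : AbsSC α}
    (hKtp : Ktp.faces ⊆ Kp.faces ∪ starFaces P z) (hz : ∀ j, z j ∉ Kq.vertexSet)
    {s : Finset α} (hs : s ∈ Ktp.faces) (h2 : s.card = 2) (hsq : s ∈ Kq.faces) :
    s ∈ Kp.faces :=
  (hKtp hs).resolve_right fun hstar => by
    obtain ⟨j, hj⟩ := exists_mem_of_mem_starFaces hstar h2
    exact hz j (Kq.down_closed hsq (Finset.singleton_subset_iff.mpr hj)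
      (Finset.singleton_nonempty _))

end Star

theorem stmt13_general {α : Type} [DecidableEq α] (n k : ℕ)
    (K Kt : ℕ → AbsSC α)
    (hKt0 : (Kt 0).faces = ∅)
    (P : Fin k → Set α)
    (z : Fin k → α)
    (hznew : ∀ (j : Fin k) (i : ℕ), i ≤ n → z j ∉ (K i).vertexSet)
    (hKt : ∀ i, 1 ≤ i → i ≤ n → (Kt i).faces = (K i).faces ∪ starFaces P z)
    (φ : ∀ i : ℕ, (K i).Homology 1 →ₗ[ZMod 2] (K (i + 1)).Homology 1)
    (ψ : ∀ i : ℕ, (Kt i).Homology 1 →ₗ[ZMod 2] (Kt (i + 1)).Homology 1)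
    (θ : ∀ i : ℕ, (K i).Homology 1 →ₗ[ZMod 2] (Kt i).Homology 1)
    (hφ : ∀ i, i < n → AbsSC.InducedHom (K i) (K (i + 1)) 1 (φ i))
    (hψ : ∀ i, i < n → AbsSC.InducedHom (Kt i) (Kt (i + 1)) 1 (ψ i))
    (hθ : ∀ i, i ≤ n → AbsSC.InducedHom (K i) (Kt i) 1 (θ i))
    (hsq : ∀ i, i < n → (θ (i + 1)).comp (φ i) = (ψ i).comp (θ i))
    (b d : ℕ) (hbn : b ≤ n)
    (s : (K b).Homology 1) :
    (HasPersIntervalFin φ n b d s → HasPersIntervalFin ψ n b d (θ b s)) ∧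
    (HasPersIntervalInf φ n b s → HasPersIntervalInf ψ n b (θ b s)) := by
  have hKt_sub : ∀ i, i ≤ n → (Kt i).faces ⊆ (K i).faces ∪ starFaces P z := by
    intro i hin
    rcases Nat.eq_zero_or_pos i with rfl | hi
    · simp only [hKt0, Set.empty_subset]
    · exact (hKt i hi hin).le
  have hreflect : ∀ {p q : ℕ} (h : p ≤ q), q ≤ n →
      ∀ x, θ q x ∈ LinearMap.range (comps ψ h) → x ∈ LinearMap.range (comps φ h) :=
    fun h hqn _ => AbsSC.mem_range_of_map_mem_range (AbsSC.inducedHom_comps hφ h hqn)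
      (AbsSC.inducedHom_comps hψ h hqn) (hθ _ hqn)
      (fun _ hs => AbsSC.mem_faces_of_card_eq_three (hKt_sub _ hqn) hs)
      (fun _ hs => AbsSC.mem_faces_of_card_eq_two (hKt_sub _ (h.trans hqn))
        (fun j => hznew j _ hqn) hs)
  exact ⟨HasPersIntervalFin.map hsq hreflect, HasPersIntervalInf.map hsq hreflect hbn⟩

/-- for `b, d ∈ {1, …, n}`, if `s ∈ H_1(K_b)` has persistence interval
`(b, d)` in `H_1(K_•)`, then `θ_{1,b}(s) ∈ H_1(K̃_b)` has persistence interval `(b, d)`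
in `H_1(K̃_•)`; and if `s` has persistence interval `(b, ∞)` in `H_1(K_•)`, then
`θ_{1,b}(s)` has persistence interval `(b, ∞)` in `H_1(K̃_•)`. -/
theorem stmt13 {α : Type} [DecidableEq α] (n k : ℕ)
    (K Kt : ℕ → AbsSC α)
    (hK0 : (K 0).faces = ∅)
    (hKt0 : (Kt 0).faces = ∅)
    (hKmono : ∀ i, i < n → (K i).faces ⊆ (K (i + 1)).faces)
    (hKtmono : ∀ i, i < n → (Kt i).faces ⊆ (Kt (i + 1)).faces)
    (P : Fin k → Set α)
    (hPne : ∀ j, (P j).Nonempty)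
    (hPdisj : Pairwise (Function.onFun Disjoint P))
    (hPunion : (⋃ j, P j) = (K 1).vertexSet)
    (z : Fin k → α)
    (hzinj : Function.Injective z)
    (hznew : ∀ (j : Fin k) (i : ℕ), i ≤ n → z j ∉ (K i).vertexSet)
    (hKt : ∀ i, 1 ≤ i → i ≤ n → (Kt i).faces = (K i).faces ∪ starFaces P z)
    (φ : ∀ i : ℕ, (K i).Homology 1 →ₗ[ZMod 2] (K (i + 1)).Homology 1)
    (ψ : ∀ i : ℕ, (Kt i).Homology 1 →ₗ[ZMod 2] (Kt (i + 1)).Homology 1)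
    (θ : ∀ i : ℕ, (K i).Homology 1 →ₗ[ZMod 2] (Kt i).Homology 1)
    (hφ : ∀ i, i < n → AbsSC.InducedHom (K i) (K (i + 1)) 1 (φ i))
    (hψ : ∀ i, i < n → AbsSC.InducedHom (Kt i) (Kt (i + 1)) 1 (ψ i))
    (hθ : ∀ i, i ≤ n → AbsSC.InducedHom (K i) (Kt i) 1 (θ i))
    (hsq : ∀ i, i < n → (θ (i + 1)).comp (φ i) = (ψ i).comp (θ i))
    (b d : ℕ) (hb1 : 1 ≤ b) (hbn : b ≤ n) (hd1 : 1 ≤ d) (hdn : d ≤ n)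
    (s : (K b).Homology 1) :
    (HasPersIntervalFin φ n b d s → HasPersIntervalFin ψ n b d (θ b s)) ∧
    (HasPersIntervalInf φ n b s → HasPersIntervalInf ψ n b (θ b s)) :=
  stmt13_general n k K Kt hKt0 P z hznew hKt φ ψ θ hφ hψ hθ hsq b d hbn s
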